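/- arXiv:2402.01249 — 5 statements merged into one kernel-verified Lean document; each statement's English description precedes it below -/
import Mathlib

section
/- A pencil of lines may be contained in at most one regular pencil; that is, if a pencil α is contained in regular pencils ρ and σ, then ρ = σ. -/
/-- An incidence plane: points, lines, and an incidence relation. -/
structure IncidencePlane where
  Point : Type
  Line : Type
  mem : Point → Line → Prop

namespace IncidencePlane

variable (G : IncidencePlane)

/-- Lines `l` and `m` intersect: they are distinct and have a common point. -/
def Intersect (l m : G.Line) : Prop := l ≠ m ∧ ∃ Q, G.mem Q l ∧ G.mem Q m

/-- Parallel is the negation of intersecting. -/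
def Par (l m : G.Line) : Prop := ¬ G.Intersect l m

/-- The point set of a line. -/
def lineSet (l : G.Line) : Set G.Point := {Q | G.mem Q l}

/-- The pencil of all lines through a point `Q`, written `Q*`. -/
def pointPencil (Q : G.Point) : Set G.Line := {l | G.mem Q l}

/-- The pencil of all lines parallel to `l`, written `l*`. -/
def parPencil (l : G.Line) : Set G.Line := {m | G.Par m l}

/-- A regular pencil has the form `Q*` or `l*`. -/
def Regular (ρ : Set G.Line) : Prop :=
  (∃ Q, ρ = G.pointPencil Q) ∨ (∃ l, ρ = G.parPencil l)

/-- A pencil: (1) it cannot contain fewer than two lines; (2) two distinct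
lines of it lying in a regular pencil `ρ` force inclusion in `ρ`. -/
def IsPencil (α : Set G.Line) : Prop :=
  (¬ ∀ l ∈ α, ∀ m ∈ α, l = m) ∧
  (∀ ρ : Set G.Line, G.Regular ρ → ∀ l ∈ α, ∀ m ∈ α, l ≠ m → l ∈ ρ → m ∈ ρ → α ⊆ ρ)

/-- A complete pencil: two distinct lines of it in a regular pencil `ρ` force equality with `ρ`. -/
def Complete (α : Set G.Line) : Prop :=
  ∀ ρ : Set G.Line, G.Regular ρ → ∀ l ∈ α, ∀ m ∈ α, l ≠ m → l ∈ ρ → m ∈ ρ → α = ρ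

/-- A strictly complete pencil: contained in a regular pencil implies equal to it. -/
def StrictlyComplete (α : Set G.Line) : Prop :=
  ∀ ρ : Set G.Line, G.Regular ρ → α ⊆ ρ → α = ρ

/-- `l` lies outside the family `α`: it differs from every line of `α`. -/
def LineOutside (l : G.Line) (α : Set G.Line) : Prop := ∀ m ∈ α, l ≠ m

/-- Pencils `α` and `β` are distinct: some line of one lies outside the other. -/
def PDistinct (α β : Set G.Line) : Prop :=
  (∃ l ∈ α, G.LineOutside l β) ∨ (∃ l ∈ β, G.LineOutside l α)

/-- Pencils are equivalent when they are contained in exactly the same regular pencils. -/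
def PEquiv (α β : Set G.Line) : Prop :=
  ∀ ρ : Set G.Line, G.Regular ρ → (α ⊆ ρ ↔ β ⊆ ρ)

/-- A parallel pencil: a pencil any two of whose lines are parallel. -/
def ParallelPencil (α : Set G.Line) : Prop :=
  G.IsPencil α ∧ ∀ l ∈ α, ∀ m ∈ α, G.Par l m

/-- Point `Q` lies outside line `l`: it differs from every point of `l`. -/
def PointOutside (Q : G.Point) (l : G.Line) : Prop := ∀ R, G.mem R l → Q ≠ R

/-- The union of all pencils equivalent to `α` (the full pencil `α'`). -/
def fullPencil (α : Set G.Line) : Set G.Line :=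
  ⋃₀ {β | G.IsPencil β ∧ G.PEquiv β α}

/-- The core of two pencils: points lying on a common line of the two pencils. -/
def core (α β : Set G.Line) : Set G.Point :=
  {Q | ∃ l, l ∈ α ∩ β ∧ G.mem Q l}

/-- A virtual line: a set of points which is a line whenever it is inhabited. -/
def VLine (p : Set G.Point) : Prop :=
  p.Nonempty → ∃ l : G.Line, p = G.lineSet l

/-- Distinctness of virtual lines. -/
def VDistinct (p q : Set G.Point) : Prop :=
  ¬ (p = q) ∧ ∀ l m : G.Line, p = G.lineSet l → q = G.lineSet m → l ≠ m

/-- Equivalence of virtual lines: the negation of distinctness. -/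
def VEquiv (p q : Set G.Point) : Prop := ¬ G.VDistinct p q

/-- The union of all virtual lines equivalent to `p`. -/
def vfull (p : Set G.Point) : Set G.Point :=
  ⋃₀ {q | G.VLine q ∧ G.VEquiv q p}

/-- The axioms of an incidence plane used in this paper. -/
structure Axioms (G : IncidencePlane) : Prop where
  join : ∀ Q R : G.Point, Q ≠ R → ∃ l, G.mem Q l ∧ G.mem R l
  join_unique : ∀ Q R : G.Point, Q ≠ R → ∀ l m : G.Line,
      G.mem Q l → G.mem R l → G.mem Q m → G.mem R m → l = m
  cross_unique : ∀ l m : G.Line, l ≠ m → ∀ Q R : G.Point,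
      G.mem Q l → G.mem Q m → G.mem R l → G.mem R m → Q = R
  parPost : ∀ (Q : G.Point) (l : G.Line), ∃ n, G.mem Q n ∧ G.Par n l
  parPost_unique : ∀ (Q : G.Point) (l : G.Line) (n n' : G.Line),
      G.mem Q n → G.Par n l → G.mem Q n' → G.Par n' l → n = n'
  par_int : ∀ n₁ n₂ l m : G.Line,
      G.Par n₁ l → G.Par n₂ m → G.Intersect l m → G.Intersect n₁ n₂
  not_pointOutside : ∀ (Q : G.Point) (l : G.Line), ¬ G.PointOutside Q l → G.mem Q l
  two_points : ∀ l : G.Line, ∃ Q R : G.Point, Q ≠ R ∧ G.mem Q l ∧ G.mem R l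
  exists_intersecting : ∃ l m : G.Line, G.Intersect l m

end IncidencePlane

open IncidencePlane

/-! Two distinct lines determine a regular pencil: through two points there is only one line,
through a point only one parallel to a given line, and parallelism is an equivalence relation,
so two parallel pencils sharing a line coincide. -/

namespace IncidencePlane

variable {G : IncidencePlane}

theorem Par.symm {l m : G.Line} (h : G.Par l m) : G.Par m l :=
  fun ⟨hne, Q, hQl, hQm⟩ => h ⟨hne.symm, Q, hQm, hQl⟩

theorem par_refl (l : G.Line) : G.Par l l :=
  fun ⟨hne, _⟩ => hne rfl

theorem IsPencil.exists_ne {α : Set G.Line} (hα : G.IsPencil α) :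
    ∃ l ∈ α, ∃ m ∈ α, l ≠ m := by
  simpa using hα.1

namespace Axioms

variable (ax : G.Axioms)
include ax

theorem par_trans {a b c : G.Line} (hab : G.Par a b) (hbc : G.Par b c) : G.Par a c :=
  fun hac => hbc (ax.par_int b c a c hab.symm (par_refl c) hac)

theorem eq_of_mem_pointPencil {Q R : G.Point} {l m : G.Line} (hlm : l ≠ m)
    (hlQ : l ∈ G.pointPencil Q) (hmQ : m ∈ G.pointPencil Q)
    (hlR : l ∈ G.pointPencil R) (hmR : m ∈ G.pointPencil R) : Q = R := by
  by_contra hQR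
  exact hlm (ax.join_unique Q R hQR l m hlQ hlR hmQ hmR)

theorem eq_of_mem_pointPencil_of_mem_parPencil {Q : G.Point} {k l m : G.Line}
    (hlQ : l ∈ G.pointPencil Q) (hmQ : m ∈ G.pointPencil Q)
    (hlk : l ∈ G.parPencil k) (hmk : m ∈ G.parPencil k) : l = m :=
  ax.parPost_unique Q k l m hlQ hlk hmQ hmk

theorem parPencil_eq_of_mem {k k' l : G.Line}
    (hlk : l ∈ G.parPencil k) (hlk' : l ∈ G.parPencil k') : G.parPencil k = G.parPencil k' := by
  have hkk' : G.Par k k' := ax.par_trans hlk.symm hlk'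
  ext n
  exact ⟨fun hnk => ax.par_trans hnk hkk', fun hnk' => ax.par_trans hnk' hkk'.symm⟩

theorem regular_eq_of_mem_of_mem {ρ σ : Set G.Line} (hρ : G.Regular ρ) (hσ : G.Regular σ)
    {l m : G.Line} (hlm : l ≠ m) (hlρ : l ∈ ρ) (hmρ : m ∈ ρ) (hlσ : l ∈ σ) (hmσ : m ∈ σ) :
    ρ = σ := by
  rcases hρ with ⟨Q, rfl⟩ | ⟨k, rfl⟩ <;> rcases hσ with ⟨R, rfl⟩ | ⟨k', rfl⟩
  · rw [ax.eq_of_mem_pointPencil hlm hlρ hmρ hlσ hmσ]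
  · exact absurd (ax.eq_of_mem_pointPencil_of_mem_parPencil hlρ hmρ hlσ hmσ) hlm
  · exact absurd (ax.eq_of_mem_pointPencil_of_mem_parPencil hlσ hmσ hlρ hmρ) hlm
  · exact ax.parPencil_eq_of_mem hlρ hlσ

end Axioms

end IncidencePlane

/-- a pencil is contained in at most one regular pencil. -/
theorem pencil_in_at_most_one_regular (G : IncidencePlane) (ax : G.Axioms)
    (α ρ σ : Set G.Line) (hα : G.IsPencil α)
    (hρ : G.Regular ρ) (hσ : G.Regular σ)
    (hαρ : α ⊆ ρ) (hασ : α ⊆ σ) : ρ = σ := by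
  obtain ⟨l, hl, m, hm, hlm⟩ := hα.exists_ne
  exact ax.regular_eq_of_mem_of_mem hρ hσ hlm (hαρ hl) (hαρ hm) (hασ hl) (hασ hm)
end

section
/- Given any two lines l and m, the set φ(l,m) = {l, m} ∪ {n : l×m exists and passes through n, i.e., l and m intersect at a point lying on n} ∪ {n : n ∥ l and l ∥ m} is a complete pencil containing l and m. -/
open IncidencePlane

/-! `φ(l,m)` is always a regular pencil: it is `(l×m)*` when `l` and `m` intersect, and `l*`
otherwise (this covers `l = m`). A regular pencil is determined by any two of its distinct lines,
by uniqueness of joins and of parallels, so regular pencils are complete, and they are pencils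
since each contains two distinct lines. -/

namespace IncidencePlane

variable {G : IncidencePlane}

theorem Axioms.par_trans_s4 (ax : G.Axioms) {a b c : G.Line} (hab : G.Par a b)
    (hbc : G.Par b c) : G.Par a c :=
  fun ⟨hne, Q, ha, hc⟩ => hne (ax.parPost_unique Q b a c ha hab hc hbc.symm)

theorem Axioms.parPencil_eq_of_par (ax : G.Axioms) {a b : G.Line} (hab : G.Par a b) :
    G.parPencil a = G.parPencil b :=
  Set.ext fun _ => ⟨fun h => ax.par_trans_s4 h hab, fun h => ax.par_trans_s4 h hab.symm⟩

theorem Axioms.exists_not_mem (ax : G.Axioms) (l : G.Line) : ∃ P, ¬ G.mem P l := by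
  by_contra! hall
  have eq_l : ∀ k : G.Line, k = l := fun k => by
    obtain ⟨Q, R, hQR, hQ, hR⟩ := ax.two_points k
    exact ax.join_unique Q R hQR k l hQ hR (hall Q) (hall R)
  obtain ⟨l₁, l₂, hne, -⟩ := ax.exists_intersecting
  exact hne ((eq_l l₁).trans (eq_l l₂).symm)

theorem Axioms.exists_ne_mem_pointPencil (ax : G.Axioms) (Q : G.Point) :
    ∃ a ∈ G.pointPencil Q, ∃ b ∈ G.pointPencil Q, a ≠ b := by
  obtain ⟨k, -⟩ := ax.exists_intersecting
  obtain ⟨a, hQa, -⟩ := ax.parPost Q k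
  obtain ⟨S, hSa⟩ := ax.exists_not_mem a
  have hSQ : S ≠ Q := fun e => hSa (e ▸ hQa)
  obtain ⟨b, hSb, hQb⟩ := ax.join S Q hSQ
  exact ⟨a, hQa, b, hQb, fun e => hSa (e ▸ hSb)⟩

theorem Axioms.exists_ne_mem_parPencil (ax : G.Axioms) (l : G.Line) :
    ∃ a ∈ G.parPencil l, ∃ b ∈ G.parPencil l, a ≠ b := by
  obtain ⟨P, hPl⟩ := ax.exists_not_mem l
  obtain ⟨n, hPn, hnl⟩ := ax.parPost P l
  exact ⟨n, hnl, l, par_refl l, fun e => hPl (e ▸ hPn)⟩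

theorem Axioms.exists_ne_mem_of_regular (ax : G.Axioms) {ρ : Set G.Line} (hρ : G.Regular ρ) :
    ∃ a ∈ ρ, ∃ b ∈ ρ, a ≠ b := by
  rcases hρ with ⟨Q, rfl⟩ | ⟨l, rfl⟩
  · exact ax.exists_ne_mem_pointPencil Q
  · exact ax.exists_ne_mem_parPencil l

theorem Axioms.regular_eq_of_mem (ax : G.Axioms) {α β : Set G.Line} (hα : G.Regular α)
    (hβ : G.Regular β) {a b : G.Line} (hab : a ≠ b) (haα : a ∈ α) (hbα : b ∈ α)
    (haβ : a ∈ β) (hbβ : b ∈ β) : α = β := by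
  rcases hα with ⟨Q, rfl⟩ | ⟨k, rfl⟩ <;> rcases hβ with ⟨R, rfl⟩ | ⟨k', rfl⟩
  · by_contra hQR
    exact hab (ax.join_unique Q R (fun e => hQR (congrArg G.pointPencil e)) a b haα haβ hbα hbβ)
  · exact (hab (ax.parPost_unique Q k' a b haα haβ hbα hbβ)).elim
  · exact (hab (ax.parPost_unique R k a b haβ haα hbβ hbα)).elim
  · exact ax.parPencil_eq_of_par (ax.par_trans_s4 haα.symm haβ)

theorem Axioms.complete_of_regular (ax : G.Axioms) {α : Set G.Line} (hα : G.Regular α) :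
    G.Complete α :=
  fun _ hρ _ ha _ hb hab haρ hbρ => ax.regular_eq_of_mem hα hρ hab ha hb haρ hbρ

theorem Axioms.isPencil_of_regular (ax : G.Axioms) {α : Set G.Line} (hα : G.Regular α) :
    G.IsPencil α := by
  obtain ⟨a, ha, b, hb, hab⟩ := ax.exists_ne_mem_of_regular hα
  exact ⟨fun h => hab (h a ha b hb),
    fun ρ hρ _ hl _ hm hlm hlρ hmρ => (ax.complete_of_regular hα ρ hρ _ hl _ hm hlm hlρ hmρ).le⟩

def phi (l m : G.Line) : Set G.Line :=
  {l, m} ∪ {n | ∃ Q : G.Point, l ≠ m ∧ G.mem Q l ∧ G.mem Q m ∧ G.mem Q n} ∪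
    {n | G.Par n l ∧ G.Par l m}

theorem left_mem_phi (l m : G.Line) : l ∈ phi l m := Or.inl (Or.inl (Or.inl rfl))

theorem right_mem_phi (l m : G.Line) : m ∈ phi l m := Or.inl (Or.inl (Or.inr rfl))

theorem Axioms.phi_eq_pointPencil (ax : G.Axioms) {l m : G.Line} {Q : G.Point} (hlm : l ≠ m)
    (hQl : G.mem Q l) (hQm : G.mem Q m) : phi l m = G.pointPencil Q := by
  ext n
  constructor
  · rintro (((rfl | rfl) | ⟨R, -, hRl, hRm, hRn⟩) | ⟨-, hpar⟩)
    · exact hQl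
    · exact hQm
    · exact ax.cross_unique l m hlm Q R hQl hQm hRl hRm ▸ hRn
    · exact (hpar ⟨hlm, Q, hQl, hQm⟩).elim
  · exact fun hQn => Or.inl (Or.inr ⟨Q, hlm, hQl, hQm, hQn⟩)

theorem phi_eq_parPencil {l m : G.Line} (hlm : G.Par l m) : phi l m = G.parPencil l := by
  ext n
  constructor
  · rintro (((rfl | rfl) | ⟨Q, hne, hQl, hQm, -⟩) | ⟨hnl, -⟩)
    · exact par_refl n
    · exact hlm.symm
    · exact (hlm ⟨hne, Q, hQl, hQm⟩).elim
    · exact hnl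
  · exact fun hnl => Or.inr ⟨hnl, hlm⟩

theorem Axioms.regular_phi (ax : G.Axioms) (l m : G.Line) : G.Regular (phi l m) := by
  by_cases hint : G.Intersect l m
  · obtain ⟨hlm, Q, hQl, hQm⟩ := hint
    exact Or.inl ⟨Q, ax.phi_eq_pointPencil hlm hQl hQm⟩
  · exact Or.inr ⟨l, phi_eq_parPencil hint⟩

end IncidencePlane

/-- φ(l,m) is a complete pencil containing l and m. -/
theorem phi_complete_pencil (G : IncidencePlane) (ax : G.Axioms) (l m : G.Line) :
    G.IsPencil ({l, m} ∪
        {n | ∃ Q : G.Point, l ≠ m ∧ G.mem Q l ∧ G.mem Q m ∧ G.mem Q n} ∪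
        {n | G.Par n l ∧ G.Par l m}) ∧
    G.Complete ({l, m} ∪
        {n | ∃ Q : G.Point, l ≠ m ∧ G.mem Q l ∧ G.mem Q m ∧ G.mem Q n} ∪
        {n | G.Par n l ∧ G.Par l m}) ∧
    l ∈ ({l, m} ∪
        {n | ∃ Q : G.Point, l ≠ m ∧ G.mem Q l ∧ G.mem Q m ∧ G.mem Q n} ∪
        {n | G.Par n l ∧ G.Par l m}) ∧
    m ∈ ({l, m} ∪
        {n | ∃ Q : G.Point, l ≠ m ∧ G.mem Q l ∧ G.mem Q m ∧ G.mem Q n} ∪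
        {n | G.Par n l ∧ G.Par l m}) := by
  have hφ := ax.regular_phi l m
  exact ⟨ax.isPencil_of_regular hφ, ax.complete_of_regular hφ, left_mem_phi l m,
    right_mem_phi l m⟩
end

section
/- If α is a parallel pencil and α ≈ β, then β is also a parallel pencil. -/
namespace IncidencePlane

variable {G : IncidencePlane}

theorem regular_pointPencil (Q : G.Point) : G.Regular (G.pointPencil Q) :=
  Or.inl ⟨Q, rfl⟩

theorem IsPencil.exists_subset_pointPencil_of_intersect {β : Set G.Line} (hβ : G.IsPencil β)
    {l m : G.Line} (hl : l ∈ β) (hm : m ∈ β) (hlm : G.Intersect l m) :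
    ∃ Q, β ⊆ G.pointPencil Q := by
  obtain ⟨hne, Q, hQl, hQm⟩ := hlm
  exact ⟨Q, hβ.2 _ (regular_pointPencil Q) l hl m hm hne hQl hQm⟩

theorem ParallelPencil.not_subset_pointPencil {α : Set G.Line} (hα : G.ParallelPencil α)
    (Q : G.Point) : ¬ α ⊆ G.pointPencil Q := by
  intro hαQ
  obtain ⟨l, hl, m, hm, hne⟩ : ∃ l ∈ α, ∃ m ∈ α, l ≠ m := by simpa using hα.1.1
  exact hα.2 l hl m hm ⟨hne, Q, hαQ hl, hαQ hm⟩

end IncidencePlane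

open IncidencePlane

theorem equiv_parallel_pencil_general (G : IncidencePlane)
    (α β : Set G.Line) (hα : G.ParallelPencil α) (hβ : G.IsPencil β)
    (h : G.PEquiv α β) : G.ParallelPencil β := by
  refine ⟨hβ, fun l hl m hm hlm => ?_⟩
  obtain ⟨Q, hβQ⟩ := hβ.exists_subset_pointPencil_of_intersect hl hm hlm
  exact hα.not_subset_pointPencil Q ((h _ (regular_pointPencil Q)).2 hβQ)

/-- a pencil equivalent to a parallel pencil is a parallel pencil. -/
theorem equiv_parallel_pencil (G : IncidencePlane) (ax : G.Axioms)
    (α β : Set G.Line) (hα : G.ParallelPencil α) (hβ : G.IsPencil β)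
    (h : G.PEquiv α β) : G.ParallelPencil β :=
  equiv_parallel_pencil_general G α β hα hβ h
end

section
/- A pencil α is equivalent to a regular pencil ρ if and only if α ⊆ ρ; consequently each equivalence class of pencils contains at most one regular pencil. -/
open IncidencePlane

/-! A pencil contains two distinct lines, and two distinct lines lie in at most one regular
pencil: two point pencils by uniqueness of the join, a point pencil and a parallel pencil by
uniqueness of the parallel, two parallel pencils because parallelism is transitive. So a regular
pencil containing `α` is the only regular pencil containing `α`, which is what `α ≈ ρ` demands. -/

namespace IncidencePlane

variable {G : IncidencePlane}

namespace Axioms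

theorem par_trans_s12 (ax : G.Axioms) {l m n : G.Line} (hlm : G.Par l m) (hmn : G.Par m n) :
    G.Par l n :=
  fun hln => hmn (ax.par_int m n l n hlm.symm (par_refl n) hln)

theorem parPencil_eq_of_par_s12 (ax : G.Axioms) {l m : G.Line} (h : G.Par l m) :
    G.parPencil l = G.parPencil m := by
  ext n
  exact ⟨fun hn => ax.par_trans_s12 hn h, fun hn => ax.par_trans_s12 hn h.symm⟩

theorem regular_eq_of_mem_of_ne (ax : G.Axioms) {ρ σ : Set G.Line} (hρ : G.Regular ρ)
    (hσ : G.Regular σ) {l m : G.Line} (hlm : l ≠ m) (hlρ : l ∈ ρ) (hmρ : m ∈ ρ)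
    (hlσ : l ∈ σ) (hmσ : m ∈ σ) : ρ = σ := by
  rcases hρ with ⟨Q, rfl⟩ | ⟨l₀, rfl⟩ <;> rcases hσ with ⟨R, rfl⟩ | ⟨m₀, rfl⟩
  · obtain rfl | hQR := eq_or_ne Q R
    · rfl
    · exact absurd (ax.join_unique Q R hQR l m hlρ hlσ hmρ hmσ) hlm
  · exact absurd (ax.parPost_unique Q m₀ l m hlρ hlσ hmρ hmσ) hlm
  · exact absurd (ax.parPost_unique R l₀ l m hlσ hlρ hmσ hmρ) hlm
  · exact ax.parPencil_eq_of_par_s12 (ax.par_trans_s12 hlρ.symm hlσ)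

theorem regular_eq_of_subset (ax : G.Axioms) {α ρ σ : Set G.Line} (hα : G.IsPencil α)
    (hρ : G.Regular ρ) (hσ : G.Regular σ) (hαρ : α ⊆ ρ) (hασ : α ⊆ σ) : ρ = σ := by
  obtain ⟨l, hl, m, hm, hlm⟩ := hα.exists_ne
  exact ax.regular_eq_of_mem_of_ne hρ hσ hlm (hαρ hl) (hαρ hm) (hασ hl) (hασ hm)

theorem pEquiv_regular_iff_subset (ax : G.Axioms) {α ρ : Set G.Line} (hα : G.IsPencil α)
    (hρ : G.Regular ρ) : G.PEquiv α ρ ↔ α ⊆ ρ := by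
  refine ⟨fun h => (h ρ hρ).2 subset_rfl, fun hαρ σ hσ => ⟨fun hασ => ?_, hαρ.trans⟩⟩
  rw [ax.regular_eq_of_subset hα hρ hσ hαρ hασ]

end Axioms

end IncidencePlane

/-- α ≈ ρ iff α ⊆ ρ for regular ρ; each equivalence class
contains at most one regular pencil. -/
theorem equiv_regular_iff_subset (G : IncidencePlane) (ax : G.Axioms) :
    (∀ α ρ : Set G.Line, G.IsPencil α → G.Regular ρ →
      (G.PEquiv α ρ ↔ α ⊆ ρ)) ∧
    (∀ α ρ σ : Set G.Line, G.IsPencil α → G.Regular ρ → G.Regular σ →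
      G.PEquiv α ρ → G.PEquiv α σ → ρ = σ) :=
  ⟨fun _ _ hα hρ => ax.pEquiv_regular_iff_subset hα hρ,
    fun _ _ _ hα hρ hσ hαρ hασ => ax.regular_eq_of_subset hα hρ hσ
      ((ax.pEquiv_regular_iff_subset hα hρ).1 hαρ) ((ax.pEquiv_regular_iff_subset hα hσ).1 hασ)⟩
end

section
/- For non-equivalent pencils α and β, their core α ⊓ β = {Q : Q lies on some line belonging to both α and β} is a virtual line: if it is nonvoid, it is (the point set of) a line. -/
open IncidencePlane

namespace IncidencePlane

variable {G : IncidencePlane}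

theorem IsPencil.pEquiv_of_ne_of_mem_inter {α β : Set G.Line} (hα : G.IsPencil α)
    (hβ : G.IsPencil β) {l m : G.Line} (hl : l ∈ α ∩ β) (hm : m ∈ α ∩ β) (hne : l ≠ m) :
    G.PEquiv α β := fun ρ hρ =>
  ⟨fun hαρ => hβ.2 ρ hρ l hl.2 m hm.2 hne (hαρ hl.1) (hαρ hm.1),
   fun hβρ => hα.2 ρ hρ l hl.1 m hm.1 hne (hβρ hl.2) (hβρ hm.2)⟩

theorem vLine_core_of_subsingleton {α β : Set G.Line} (hαβ : (α ∩ β).Subsingleton) :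
    G.VLine (G.core α β) := by
  rintro ⟨-, l, hl, -⟩
  refine ⟨l, Set.ext fun R => ⟨?_, fun hR => ⟨l, hl, hR⟩⟩⟩
  rintro ⟨m, hm, hRm⟩
  rwa [hαβ hl hm]

end IncidencePlane

theorem core_is_vline_general (G : IncidencePlane)
    (α β : Set G.Line) (hα : G.IsPencil α) (hβ : G.IsPencil β)
    (h : ¬ G.PEquiv α β) : G.VLine (G.core α β) :=
  vLine_core_of_subsingleton fun _ hl _ hm =>
    by_contra fun hne => h (hα.pEquiv_of_ne_of_mem_inter hβ hl hm hne)

/-- the core of two non-equivalent pencils is a virtual line. -/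
theorem core_is_vline (G : IncidencePlane) (ax : G.Axioms)
    (α β : Set G.Line) (hα : G.IsPencil α) (hβ : G.IsPencil β)
    (h : ¬ G.PEquiv α β) : G.VLine (G.core α β) :=
  core_is_vline_general G α β hα hβ h
end
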